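/- On the Lie algebra d₄,½ with metric h₁ given by h₁(e₁,e₂) = 1, h₁(e₃,e₃) = x, h₁(e₃,e₄) = 1 (symmetric, x ≠ 0), the Ricci operator equals (3x/2)·Id, so the metric is Einstein with Einstein constant 3x/2 but not Ricci-flat. -/
import Mathlib


/-- The bracket of the Lie algebra `d₄,½` on `ℝ⁴` (0-indexed):
`[e₀,e₁] = e₂`, `[e₃,e₂] = e₂`, `[e₃,e₀] = ½e₀`, `[e₃,e₁] = ½e₁`. -/
noncomputable def brD4half (u v : Fin 4 → ℝ) : Fin 4 → ℝ :=
  ![(1/2) * (u 3 * v 0 - u 0 * v 3), (1/2) * (u 3 * v 1 - u 1 * v 3),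
    u 0 * v 1 - u 1 * v 0 + (u 3 * v 2 - u 2 * v 3), 0]

/-- The metric `h₁` on `d₄,½` (0-indexed): `h₁(e₀,e₁) = 1`, `h₁(e₂,e₂) = x`,
`h₁(e₂,e₃) = 1`, symmetric, other values zero. -/
def h1D4half (x : ℝ) (u v : Fin 4 → ℝ) : ℝ :=
  u 0 * v 1 + u 1 * v 0 + x * (u 2 * v 2) + u 2 * v 3 + u 3 * v 2

/-- Explicit formula for the Levi-Civita connection of `h₁` on `d₄,½`. -/
noncomputable def nabD4half (x : ℝ) (u v : Fin 4 → ℝ) : Fin 4 → ℝ :=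
  ![-(x/2) * (u 0 * v 2 + u 2 * v 0) - u 0 * v 3 - (1/2) * (u 3 * v 0),
    (x/2) * (u 1 * v 2 + u 2 * v 1) + (1/2) * (u 3 * v 1),
    u 0 * v 1 + x * (u 2 * v 2) + u 3 * v 2,
    -(x/2) * (u 0 * v 1 + u 1 * v 0) - x^2 * (u 2 * v 2) - x * (u 2 * v 3 + u 3 * v 2)
      - u 3 * v 3]

lemma h1_nondeg (x : ℝ) (a b : Fin 4 → ℝ)
    (H : ∀ w, h1D4half x a w = h1D4half x b w) : a = b := by
  have h0 := H ![0, 1, 0, 0]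
  have h1 := H ![1, 0, 0, 0]
  have h2 := H ![0, 0, 0, 1]
  have h3 := H ![0, 0, 1, 0]
  simp [h1D4half] at h0 h1 h2 h3
  have hx2 : x * a 2 = x * b 2 := by rw [h2]
  funext i
  fin_cases i <;> simp <;> linarith

lemma psD0 : Pi.single (0 : Fin 4) (1 : ℝ) = ![1, 0, 0, 0] := by
  funext j; fin_cases j <;> simp [Pi.single_apply]

lemma psD1 : Pi.single (1 : Fin 4) (1 : ℝ) = ![0, 1, 0, 0] := by
  funext j; fin_cases j <;> simp [Pi.single_apply]

lemma psD2 : Pi.single (2 : Fin 4) (1 : ℝ) = ![0, 0, 1, 0] := by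
  funext j; fin_cases j <;> simp [Pi.single_apply]

lemma psD3 : Pi.single (3 : Fin 4) (1 : ℝ) = ![0, 0, 0, 1] := by
  funext j; fin_cases j <;> simp [Pi.single_apply]

/-- On `d₄,½` with the metric `h₁` (`x ≠ 0`), if `∇` satisfies Koszul's formula and
`Ric` is the Ricci operator (defined via `h₁(Ric u, v) = ric(u,v)` where
`ric(u,v) = tr(w ↦ R(u,w)v)`), then `Ric = (3x/2)·Id`; in particular the metric is
Einstein with Einstein constant `3x/2` but not Ricci-flat. -/
theorem stmt11 (x : ℝ) (hx : x ≠ 0)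
    (nabla : (Fin 4 → ℝ) → (Fin 4 → ℝ) → (Fin 4 → ℝ))
    (hKoszul : ∀ u v w, 2 * h1D4half x (nabla u v) w
      = h1D4half x (brD4half u v) w + h1D4half x (brD4half w u) v
        + h1D4half x (brD4half w v) u)
    (Ric : (Fin 4 → ℝ) → (Fin 4 → ℝ))
    (hRic : ∀ u v, h1D4half x (Ric u) v
      = ∑ i : Fin 4,
          (nabla (brD4half u (Pi.single i 1)) v
            - nabla u (nabla (Pi.single i 1) v)
            + nabla (Pi.single i 1) (nabla u v)) i) :
    (∀ u, Ric u = (3 * x / 2) • u) ∧ (∃ u, Ric u ≠ 0) := by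
  have hn : ∀ u v, nabla u v = nabD4half x u v := by
    intro u v
    apply h1_nondeg x
    intro w
    have hK := hKoszul u v w
    have hN : 2 * h1D4half x (nabD4half x u v) w
        = h1D4half x (brD4half u v) w + h1D4half x (brD4half w u) v
          + h1D4half x (brD4half w v) u := by
      simp [h1D4half, brD4half, nabD4half]
      ring
    linarith
  have key : ∀ u, Ric u = (3 * x / 2) • u := by
    intro u
    apply h1_nondeg x
    intro v
    rw [hRic]
    simp only [hn, Fin.sum_univ_four, psD0, psD1, psD2, psD3]
    simp [h1D4half, brD4half, nabD4half]
    ring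
  refine ⟨key, ![1, 0, 0, 0], ?_⟩
  rw [key]
  intro hcon
  have h0 : (3 * x / 2) * 1 = 0 := by simpa using congrFun hcon 0
  exact hx (by linarith)
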